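/- arXiv:cs/0011018 — 10 statements merged into one kernel-verified Lean document; each statement's English description precedes it below -/
import Mathlib

section
/- For n ≥ 2 and α, β > 1, the determinant of the n×n matrix K defined by K(i,j) = α^(i-j) if i ≤ j and K(i,j) = β^(j-i) if i > j equals (1 - α⁻¹β⁻¹)^(n-1), which is strictly positive. -/
/-!
Subtracting `β⁻¹` times row `i` from row `i + 1` does not change the determinant. Below the
diagonal, row `i + 1` of `K` is exactly `β⁻¹` times row `i`, so the result is upper triangular,
with diagonal entries `1` in the first row and `1 - α⁻¹ β⁻¹` in the others.
-/

namespace Matrix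

variable {𝕜 : Type*} [Field 𝕜]

def geomToeplitz (n : ℕ) (α β : 𝕜) : Matrix (Fin n) (Fin n) 𝕜 :=
  of fun i j => if (i : ℕ) ≤ (j : ℕ) then α ^ ((i : ℤ) - j) else β ^ ((j : ℤ) - i)

variable {n : ℕ} {α β : 𝕜}

theorem geomToeplitz_succ_of_le (hβ : β ≠ 0) {i : Fin n} {j : Fin (n + 1)}
    (hji : (j : ℕ) ≤ i) :
    geomToeplitz (n + 1) α β i.succ j = β⁻¹ * geomToeplitz (n + 1) α β i.castSucc j := by
  simp only [geomToeplitz, of_apply, Fin.val_succ, Fin.val_castSucc]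
  rw [if_neg (by omega)]
  rcases hji.lt_or_eq with hlt | heq
  · rw [if_neg (by omega), mul_comm, ← zpow_sub_one₀ hβ]
    push_cast
    ring_nf
  · rw [if_pos heq.ge, heq]
    push_cast
    simp

theorem geomToeplitz_succ_succ (i : Fin n) :
    geomToeplitz (n + 1) α β i.succ i.succ = 1 := by
  simp [geomToeplitz]

theorem geomToeplitz_castSucc_succ (i : Fin n) :
    geomToeplitz (n + 1) α β i.castSucc i.succ = α⁻¹ := by
  simp only [geomToeplitz, of_apply, Fin.val_succ, Fin.val_castSucc]
  rw [if_pos (by omega)]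
  push_cast
  simp

theorem det_geomToeplitz (hβ : β ≠ 0) :
    (geomToeplitz n α β).det = (1 - α⁻¹ * β⁻¹) ^ (n - 1) := by
  rcases n with _ | n
  · simp
  set K := geomToeplitz (n + 1) α β with hK
  let U : Matrix (Fin (n + 1)) (Fin (n + 1)) 𝕜 :=
    of fun i j => Fin.cases (K 0 j) (fun i => K i.succ j - β⁻¹ * K i.castSucc j) i
  have hKU : K.det = U.det :=
    det_eq_of_forall_row_eq_smul_add_pred (fun _ => β⁻¹) (fun _ => rfl)
      (fun i j => by simp [U])
  have hU : U.IsUpperTriangular := by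
    intro i j hji
    induction i using Fin.cases with
    | zero => exact absurd hji (Fin.not_lt_zero j)
    | succ i =>
      replace hji : (j : ℕ) ≤ i := Nat.lt_succ_iff.mp hji
      change K i.succ j - β⁻¹ * K i.castSucc j = 0
      rw [hK, geomToeplitz_succ_of_le hβ hji, sub_self]
  rw [hKU, det_of_isUpperTriangular hU, Fin.prod_univ_succ]
  have hU0 : U 0 0 = 1 := by simp [U, K, geomToeplitz]
  have hUsucc (i : Fin n) : U i.succ i.succ = 1 - α⁻¹ * β⁻¹ := by
    change K i.succ i.succ - β⁻¹ * K i.castSucc i.succ = _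
    rw [hK, geomToeplitz_succ_succ, geomToeplitz_castSucc_succ, mul_comm]
  simp only [hU0, hUsucc, one_mul, Finset.prod_const, Finset.card_univ, Fintype.card_fin,
    Nat.add_sub_cancel]

end Matrix

open Matrix in
theorem det_K_general (n : ℕ) (α β : ℝ) (hα : 1 < α) (hβ : 1 < β)
    (K : Matrix (Fin n) (Fin n) ℝ)
    (hK : ∀ i j : Fin n, K i j =
      if (i : ℕ) ≤ (j : ℕ) then α ^ ((i : ℤ) - (j : ℤ)) else β ^ ((j : ℤ) - (i : ℤ))) :
    K.det = (1 - α⁻¹ * β⁻¹) ^ (n - 1) ∧ 0 < (1 - α⁻¹ * β⁻¹) ^ (n - 1) := by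
  have hKeq : K = geomToeplitz n α β := ext hK
  have hprod : α⁻¹ * β⁻¹ < 1 := by
    rw [← mul_inv]
    exact inv_lt_one_of_one_lt₀ (one_lt_mul_of_lt_of_le hα hβ.le)
  exact ⟨hKeq ▸ det_geomToeplitz (zero_lt_one.trans hβ).ne', pow_pos (sub_pos.2 hprod) _⟩

theorem det_K (n : ℕ) (hn : 2 ≤ n) (α β : ℝ) (hα : 1 < α) (hβ : 1 < β)
    (K : Matrix (Fin n) (Fin n) ℝ)
    (hK : ∀ i j : Fin n, K i j =
      if (i : ℕ) ≤ (j : ℕ) then α ^ ((i : ℤ) - (j : ℤ)) else β ^ ((j : ℤ) - (i : ℤ))) :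
    K.det = (1 - α⁻¹ * β⁻¹) ^ (n - 1) ∧ 0 < (1 - α⁻¹ * β⁻¹) ^ (n - 1) :=
  det_K_general n α β hα hβ K hK
end

section
/- For n ≥ 2 and α, β > 1, the matrix K (with K(i,j) = α^(i-j) if i ≤ j, β^(j-i) if i > j) is invertible. -/
/-!
With `a = α⁻¹` and `b = β⁻¹`, the matrix is `K i j = a ^ (j - i)` above the diagonal and
`b ^ (i - j)` below it. Subtracting `a` times row `i + 1` from row `i` clears the part of row `i`
strictly above the diagonal and leaves `1 - a * b` on the diagonal; the last row is already
lower triangular with diagonal entry `1`. Hence `det K = (1 - a * b) ^ (n - 1)`, which is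
nonzero because `a * b < 1`.
-/

open Finset

section KMS

open Matrix

variable {R : Type*} [CommRing R]

/-- Entries of an asymmetric Kac–Murdock–Szegő matrix, indexed by `ℕ` so that rows `i` and
`i + 1` can be compared without leaving `Fin n`. -/
def kmsEntry (a b : R) (p q : ℕ) : R :=
  if p ≤ q then a ^ (q - p) else b ^ (p - q)

def kmsMatrix (n : ℕ) (a b : R) : Matrix (Fin n) (Fin n) R :=
  Matrix.of fun i j => kmsEntry a b i j

def oneSubSuperdiag (n : ℕ) (a : R) : Matrix (Fin n) (Fin n) R :=
  Matrix.of fun i j => (if (j : ℕ) = i then 1 else 0) - a * if (j : ℕ) = i + 1 then 1 else 0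

theorem kmsEntry_self (a b : R) (p : ℕ) : kmsEntry a b p p = 1 := by
  simp [kmsEntry]

theorem kmsEntry_sub_mul_kmsEntry_succ (a b : R) (p q : ℕ) :
    kmsEntry a b p q - a * kmsEntry a b (p + 1) q =
      if q ≤ p then (1 - a * b) * b ^ (p - q) else 0 := by
  unfold kmsEntry
  rcases lt_or_ge p q with h | h
  · rw [if_pos h.le, if_pos (Nat.succ_le_of_lt h), if_neg (by omega),
      show q - p = q - (p + 1) + 1 by omega]
    ring
  · rw [if_neg (by omega : ¬p + 1 ≤ q), if_pos h, show p + 1 - q = p - q + 1 by omega]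
    rcases h.eq_or_lt with rfl | h
    · simp only [le_refl, if_true, Nat.sub_self, pow_zero]
      ring
    · rw [if_neg (by omega)]
      ring

theorem oneSubSuperdiag_isUpperTriangular (n : ℕ) (a : R) :
    (oneSubSuperdiag n a).IsUpperTriangular := by
  intro i j hji
  have : (j : ℕ) < i := hji
  simp only [oneSubSuperdiag, of_apply]
  rw [if_neg (by omega), if_neg (by omega)]
  ring

theorem det_oneSubSuperdiag (n : ℕ) (a : R) : (oneSubSuperdiag n a).det = 1 := by
  rw [det_of_isUpperTriangular (oneSubSuperdiag_isUpperTriangular n a)]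
  exact prod_eq_one fun i _ => by simp [oneSubSuperdiag]

theorem oneSubSuperdiag_mul_kmsMatrix_apply (n : ℕ) (a b : R) (i j : Fin n) :
    (oneSubSuperdiag n a * kmsMatrix n a b) i j =
      if (i : ℕ) + 1 < n then kmsEntry a b i j - a * kmsEntry a b (i + 1) j
      else kmsEntry a b i j := by
  simp only [mul_apply, oneSubSuperdiag, kmsMatrix, of_apply]
  rw [Fin.sum_univ_eq_sum_range (fun k => ((if k = (i : ℕ) then 1 else 0) -
    a * if k = (i : ℕ) + 1 then 1 else 0) * kmsEntry a b k j)]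
  simp only [sub_mul, sum_sub_distrib, mul_assoc, ← mul_sum, ite_mul, one_mul, zero_mul,
    sum_ite_eq', mem_range, if_pos i.isLt]
  split_ifs <;> ring

theorem oneSubSuperdiag_mul_kmsMatrix_isLowerTriangular (n : ℕ) (a b : R) :
    (oneSubSuperdiag n a * kmsMatrix n a b).IsLowerTriangular := by
  intro i j hij
  have : (i : ℕ) < j := hij
  rw [oneSubSuperdiag_mul_kmsMatrix_apply, if_pos (by omega),
    kmsEntry_sub_mul_kmsEntry_succ, if_neg (by omega)]

theorem oneSubSuperdiag_mul_kmsMatrix_diag (n : ℕ) (a b : R) (i : Fin n) :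
    (oneSubSuperdiag n a * kmsMatrix n a b) i i = if (i : ℕ) + 1 < n then 1 - a * b else 1 := by
  rw [oneSubSuperdiag_mul_kmsMatrix_apply, kmsEntry_sub_mul_kmsEntry_succ, if_pos le_rfl,
    Nat.sub_self, pow_zero, mul_one, kmsEntry_self]

theorem prod_range_ite_succ_lt {M : Type*} [CommMonoid M] (n : ℕ) (c : M) :
    ∏ k ∈ range n, (if k + 1 < n then c else 1) = c ^ (n - 1) := by
  cases n with
  | zero => simp
  | succ m =>
    rw [prod_range_succ, if_neg (lt_irrefl _), mul_one,
      prod_congr rfl fun k hk => if_pos (by simpa using mem_range.mp hk), prod_const, card_range,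
      Nat.add_sub_cancel]

theorem det_kmsMatrix (n : ℕ) (a b : R) : (kmsMatrix n a b).det = (1 - a * b) ^ (n - 1) := by
  have h := det_mul (oneSubSuperdiag n a) (kmsMatrix n a b)
  rw [det_oneSubSuperdiag, one_mul,
    det_of_isLowerTriangular _ (oneSubSuperdiag_mul_kmsMatrix_isLowerTriangular n a b)] at h
  simp only [oneSubSuperdiag_mul_kmsMatrix_diag] at h
  rw [← h, Fin.prod_univ_eq_prod_range (fun k => if k + 1 < n then 1 - a * b else 1),
    prod_range_ite_succ_lt]

end KMS

theorem K_invertible_general (n : ℕ) (α β : ℝ) (hα : 1 < α) (hβ : 1 < β)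
    (K : Matrix (Fin n) (Fin n) ℝ)
    (hK : ∀ i j : Fin n, K i j =
      if (i : ℕ) ≤ (j : ℕ) then α ^ ((i : ℤ) - (j : ℤ)) else β ^ ((j : ℤ) - (i : ℤ))) :
    IsUnit K := by
  have hK_eq : K = kmsMatrix n α⁻¹ β⁻¹ := by
    ext i j
    rw [hK, kmsMatrix, Matrix.of_apply, kmsEntry]
    split_ifs with h
    · rw [inv_pow, ← zpow_natCast, ← zpow_neg, Nat.cast_sub h, neg_sub]
    · rw [inv_pow, ← zpow_natCast, ← zpow_neg, Nat.cast_sub (by omega), neg_sub]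
  have hab : α⁻¹ * β⁻¹ < 1 := by
    rw [← mul_inv]
    exact inv_lt_one_of_one_lt₀ (one_lt_mul_of_lt_of_le hα hβ.le)
  rw [Matrix.isUnit_iff_isUnit_det, hK_eq, det_kmsMatrix]
  exact (sub_ne_zero.mpr hab.ne').isUnit.pow _

theorem K_invertible (n : ℕ) (hn : 2 ≤ n) (α β : ℝ) (hα : 1 < α) (hβ : 1 < β)
    (K : Matrix (Fin n) (Fin n) ℝ)
    (hK : ∀ i j : Fin n, K i j =
      if (i : ℕ) ≤ (j : ℕ) then α ^ ((i : ℤ) - (j : ℤ)) else β ^ ((j : ℤ) - (i : ℤ))) :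
    IsUnit K :=
  K_invertible_general n α β hα hβ K hK
end

section
/- With D = nαβ - (n-1)(α+β) + (n-2) and r = D/(αβ-1), let b̄ ∈ ℝⁿ have components b̄_1 = α(β-1)/(αβ-1), b̄_n = (α-1)β/(αβ-1), and b̄_i = (α-1)(β-1)/(αβ-1) for 1 < i < n. Then for every j ∈ {1,...,n}, the inner product ∑_{i=1}^n b̄_i K(i,j) = 1, i.e., b̄ᵀK = uᵀ where u is the all-ones vector. -/
/-!
Split the weights as `(α - 1)(β - 1)` everywhere, plus `β - 1` at the first index and `α - 1` at
the last. Column `j` of `K` consists of the geometric sequences `α⁻¹ ^ m` (going up from the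
diagonal) and `β⁻¹ ^ m` (going down), so the uniform part of the weighted column sum is a sum of
two geometric series, `(β - 1)(α - α⁻ʲ) + (α - 1)(1 - β⁻ᵖ)` with `p = n - 1 - j`, and the two
boundary weights cancel exactly the error terms `α⁻ʲ` and `β⁻ᵖ`, leaving `αβ - 1`.
-/

open Finset

variable {𝕜 : Type*} [Field 𝕜]

theorem sub_one_mul_sum_range_inv_pow_succ {a : 𝕜} (ha : a ≠ 0) (k : ℕ) :
    (a - 1) * ∑ m ∈ range k, a⁻¹ ^ (m + 1) = 1 - a⁻¹ ^ k := by
  have hgeom := mul_neg_geom_sum a⁻¹ k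
  simp only [pow_succ, ← sum_mul]
  linear_combination hgeom + (∑ m ∈ range k, a⁻¹ ^ m) * (mul_inv_cancel₀ ha)

theorem sub_one_mul_sum_range_succ_inv_pow {a : 𝕜} (ha : a ≠ 0) (k : ℕ) :
    (a - 1) * ∑ m ∈ range (k + 1), a⁻¹ ^ m = a - a⁻¹ ^ k := by
  rw [sum_range_succ', pow_zero, mul_add, sub_one_mul_sum_range_inv_pow_succ ha]
  ring

def geomToeplitz (α β : 𝕜) (i j : ℕ) : 𝕜 :=
  if i ≤ j then α⁻¹ ^ (j - i) else β⁻¹ ^ (i - j)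

theorem geomToeplitz_eq_zpow (α β : 𝕜) (i j : ℕ) :
    geomToeplitz α β i j =
      if i ≤ j then α ^ ((i : ℤ) - (j : ℤ)) else β ^ ((j : ℤ) - (i : ℤ)) := by
  unfold geomToeplitz
  split_ifs with h
  · rw [← zpow_natCast, inv_zpow', Nat.cast_sub h, neg_sub]
  · rw [← zpow_natCast, inv_zpow', Nat.cast_sub (by omega), neg_sub]

theorem sum_range_geomToeplitz (α β : 𝕜) (j p : ℕ) :
    ∑ i ∈ range (j + 1 + p), geomToeplitz α β i j =
      ∑ m ∈ range (j + 1), α⁻¹ ^ m + ∑ m ∈ range p, β⁻¹ ^ (m + 1) := by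
  rw [sum_range_add, ← sum_range_reflect]
  congr 1
  · refine sum_congr rfl fun m hm => ?_
    rw [mem_range] at hm
    rw [geomToeplitz, if_pos (by omega)]
    congr 1
    omega
  · refine sum_congr rfl fun m _ => ?_
    rw [geomToeplitz, if_neg (by omega)]
    congr 1
    omega

theorem sum_weight_mul_geomToeplitz {α β : 𝕜} (hα : α ≠ 0) (hβ : β ≠ 0) (j p : ℕ) :
    ∑ i ∈ range (j + 1 + p),
        ((α - 1) * (β - 1) + (if i = 0 then β - 1 else 0) + (if i = j + p then α - 1 else 0)) *
          geomToeplitz α β i j = α * β - 1 := by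
  have hfirst : geomToeplitz α β 0 j = α⁻¹ ^ j := by simp [geomToeplitz]
  have hlast : geomToeplitz α β (j + p) j = β⁻¹ ^ p := by
    rcases p.eq_zero_or_pos with rfl | hp
    · simp [geomToeplitz]
    · rw [geomToeplitz, if_neg (by omega), Nat.add_sub_cancel_left]
  simp only [add_mul, sum_add_distrib, ite_mul, zero_mul, sum_ite_eq', mem_range, ← mul_sum,
    sum_range_geomToeplitz, if_pos (show 0 < j + 1 + p by omega),
    if_pos (show j + p < j + 1 + p by omega), hfirst, hlast]
  linear_combination (β - 1) * sub_one_mul_sum_range_succ_inv_pow hα j +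
    (α - 1) * sub_one_mul_sum_range_inv_pow_succ hβ p

theorem bbar_mul_K_eq_one (n : ℕ) (hn : 2 ≤ n) (α β : ℝ) (hα : 1 < α) (hβ : 1 < β)
    (K : Matrix (Fin n) (Fin n) ℝ)
    (hK : ∀ i j : Fin n, K i j =
      if (i : ℕ) ≤ (j : ℕ) then α ^ ((i : ℤ) - (j : ℤ)) else β ^ ((j : ℤ) - (i : ℤ)))
    (b : Fin n → ℝ)
    (hb : ∀ i : Fin n, b i =
      if (i : ℕ) = 0 then α * (β - 1) / (α * β - 1)
      else if (i : ℕ) = n - 1 then (α - 1) * β / (α * β - 1)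
      else (α - 1) * (β - 1) / (α * β - 1)) :
    ∀ j : Fin n, ∑ i, b i * K i j = 1 := by
  intro j
  obtain ⟨p, hp⟩ : ∃ p, n = j + 1 + p := ⟨n - 1 - j, by omega⟩
  have hD : α * β - 1 ≠ 0 := by nlinarith
  let w : ℕ → ℝ := fun i =>
    (α - 1) * (β - 1) + (if i = 0 then β - 1 else 0) + (if i = j + p then α - 1 else 0)
  have hterm (i : Fin n) : b i * K i j = w i * geomToeplitz α β i j / (α * β - 1) := by
    rw [hb, hK, geomToeplitz_eq_zpow]
    simp only [w]
    have hlast : n - 1 = j + p := by omega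
    split_ifs <;> first | omega | ring
  calc ∑ i, b i * K i j = ∑ i ∈ range n, w i * geomToeplitz α β i j / (α * β - 1) := by
        rw [← Fin.sum_univ_eq_sum_range]
        exact sum_congr rfl fun i _ => hterm i
    _ = 1 := by
        rw [← sum_div, congrArg range hp, sum_weight_mul_geomToeplitz (by positivity) (by positivity)]
        exact div_self hD
end

section
/- Let c̄ ∈ ℝⁿ have components c̄_1 = (α-1)β/(αβ-1), c̄_n = α(β-1)/(αβ-1), and c̄_i = (α-1)(β-1)/(αβ-1) for 1 < i < n. Then K c̄ = u, the all-ones vector. -/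
/-! With `x = β⁻¹` and `y = α⁻¹`, row `i` of `K` is `j ↦ x ^ (i - j)` for `j < i` and
`j ↦ y ^ (j - i)` for `j ≥ i`, while `(1 - x y) • c̄` is the weight `(1 - x) (1 - y)` at every index
plus `(1 - y) x` at the first and `(1 - x) y` at the last. Against these weights the two geometric
sums making up the row telescope to `1 - x y`. -/

open Finset

section TwoSidedPow

variable {R : Type*} [CommRing R]

def twoSidedPow (x y : R) (i j : ℕ) : R := if i ≤ j then y ^ (j - i) else x ^ (i - j)

theorem twoSidedPow_zero_right (x y : R) (i : ℕ) : twoSidedPow x y i 0 = x ^ i := by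
  rcases Nat.eq_zero_or_pos i with rfl | hi
  · simp [twoSidedPow]
  · simp [twoSidedPow, hi.ne']

theorem twoSidedPow_of_le (x y : R) {i j : ℕ} (h : i ≤ j) : twoSidedPow x y i j = y ^ (j - i) :=
  if_pos h

theorem sum_range_twoSidedPow (x y : R) {i n : ℕ} (h : i ≤ n) :
    ∑ j ∈ range n, twoSidedPow x y i j = x * ∑ k ∈ range i, x ^ k + ∑ k ∈ range (n - i), y ^ k := by
  rw [← sum_range_add_sum_Ico _ h, sum_Ico_eq_sum_range, mul_sum, ← sum_range_reflect]
  congr 1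
  · refine sum_congr rfl fun j hj => ?_
    have hj := mem_range.1 hj
    rw [twoSidedPow, if_neg (by omega), ← pow_succ', show i - (i - 1 - j) = j + 1 by omega]
  · refine sum_congr rfl fun k _ => ?_
    rw [twoSidedPow_of_le x y (Nat.le_add_right i k), Nat.add_sub_cancel_left]

theorem weighted_sum_range_twoSidedPow (x y : R) {i n : ℕ} (h : i < n) :
    (1 - x) * (1 - y) * ∑ j ∈ range n, twoSidedPow x y i j
      + (1 - y) * x * twoSidedPow x y i 0 + (1 - x) * y * twoSidedPow x y i (n - 1)
      = 1 - x * y := by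
  rw [sum_range_twoSidedPow x y h.le, twoSidedPow_zero_right, twoSidedPow_of_le x y (by omega)]
  have hx := mul_neg_geom_sum x i
  have hy := mul_neg_geom_sum y (n - i)
  have hpow : y ^ (n - i) = y * y ^ (n - 1 - i) := by rw [← pow_succ']; congr 1; omega
  linear_combination (1 - y) * x * hx + (1 - x) * hy - (1 - x) * hpow

end TwoSidedPow

theorem zpow_natCast_sub_natCast_of_le {K : Type*} [DivisionRing K] (a : K) {i j : ℕ} (h : i ≤ j) :
    a ^ ((i : ℤ) - (j : ℤ)) = a⁻¹ ^ (j - i) := by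
  rw [show (i : ℤ) - j = -((j - i : ℕ) : ℤ) by omega, zpow_neg, zpow_natCast, inv_pow]

theorem K_mul_cbar_eq_one (n : ℕ) (hn : 2 ≤ n) (α β : ℝ) (hα : 1 < α) (hβ : 1 < β)
    (K : Matrix (Fin n) (Fin n) ℝ)
    (hK : ∀ i j : Fin n, K i j =
      if (i : ℕ) ≤ (j : ℕ) then α ^ ((i : ℤ) - (j : ℤ)) else β ^ ((j : ℤ) - (i : ℤ)))
    (c : Fin n → ℝ)
    (hc : ∀ i : Fin n, c i =
      if (i : ℕ) = 0 then (α - 1) * β / (α * β - 1)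
      else if (i : ℕ) = n - 1 then α * (β - 1) / (α * β - 1)
      else (α - 1) * (β - 1) / (α * β - 1)) :
    ∀ i : Fin n, ∑ j, K i j * c j = 1 := by
  intro i
  have hα0 : α ≠ 0 := by positivity
  have hβ0 : β ≠ 0 := by positivity
  have hαβ : α * β - 1 ≠ 0 := by nlinarith
  set x := β⁻¹
  set y := α⁻¹
  have hxy : 1 - x * y ≠ 0 := by
    rw [show 1 - x * y = (α * β - 1) / (α * β) by simp only [x, y]; field_simp]
    exact div_ne_zero hαβ (mul_ne_zero hα0 hβ0)
  have hK' (j : Fin n) : K i j = twoSidedPow x y i j := by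
    rw [hK, twoSidedPow]
    split_ifs with h
    · exact zpow_natCast_sub_natCast_of_le α h
    · exact zpow_natCast_sub_natCast_of_le β (by omega)
  have hc' (j : Fin n) : c j = ((1 - x) * (1 - y) + (if (j : ℕ) = 0 then (1 - y) * x else 0)
      + (if (j : ℕ) = n - 1 then (1 - x) * y else 0)) / (1 - x * y) := by
    rw [hc]
    split_ifs <;> first | omega | (simp only [x, y]; field_simp; ring)
  have h0 : 0 ∈ range n := mem_range.2 (by omega)
  have h1 : n - 1 ∈ range n := mem_range.2 (by omega)
  calc ∑ j, K i j * c j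
      = (∑ j ∈ range n, twoSidedPow x y i j * ((1 - x) * (1 - y) + (if j = 0 then (1 - y) * x else 0)
          + (if j = n - 1 then (1 - x) * y else 0))) / (1 - x * y) := by
        rw [sum_div, ← Fin.sum_univ_eq_sum_range]
        simp only [hK', hc', mul_div_assoc]
    _ = ((1 - x) * (1 - y) * ∑ j ∈ range n, twoSidedPow x y i j
          + (1 - y) * x * twoSidedPow x y i 0 + (1 - x) * y * twoSidedPow x y i (n - 1))
          / (1 - x * y) := by
        simp only [mul_add, sum_add_distrib, mul_ite, mul_zero, sum_ite_eq', if_pos h0, if_pos h1,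
          ← sum_mul]
        ring
    _ = 1 := by rw [weighted_sum_range_twoSidedPow x y i.isLt, div_self hxy]
end

section
/- Let S be a static algorithm investing amounts s_i ≥ 0 with ∑ s_i = 1, so S(e) = ∑_{i=1}^n s_i e_i. For any admissible exchange rate sequence e with its maximum attained at index j (e_j = max_i e_i), the ratio A(e)/S(e) = e_j/∑_i s_i e_i is at most A(e_j*)/S(e_j*), where e_j* is the j-th downturn sequence defined by (e_j*)_i = α^i for i ≤ j and (e_j*)_i = α^j / β^(i-j) for i > j. Equivalently: e_j / ∑_i s_i e_i ≤ α^j / ∑_i s_i (e_j*)_i. -/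
theorem downturn_dominates (n : ℕ) (hn : 2 ≤ n) (α β : ℝ) (hα : 1 < α) (hβ : 1 < β)
    (s : ℕ → ℝ) (hs0 : ∀ i ∈ Finset.Icc 1 n, 0 ≤ s i)
    (hs1 : ∑ i ∈ Finset.Icc 1 n, s i = 1)
    (e : ℕ → ℝ) (he0 : e 0 = 1) (hpos : ∀ i ∈ Finset.Icc 1 n, 0 < e i)
    (hadm : ∀ i ∈ Finset.Icc 1 n, e (i - 1) / β ≤ e i ∧ e i ≤ e (i - 1) * α)
    (d : ℕ → ℕ → ℝ)
    (hd : ∀ j i, d j i = if i ≤ j then α ^ i else α ^ j / β ^ (i - j))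
    (j : ℕ) (hj : j ∈ Finset.Icc 1 n) (hmax : ∀ i ∈ Finset.Icc 1 n, e i ≤ e j) :
    e j / ∑ i ∈ Finset.Icc 1 n, s i * e i ≤
      α ^ j / ∑ i ∈ Finset.Icc 1 n, s i * d j i := by
  have hα0 : (0:ℝ) < α := lt_trans one_pos hα
  have hβ0 : (0:ℝ) < β := lt_trans one_pos hβ
  simp only [Finset.mem_Icc] at hj
  -- upward growth bound
  have hup : ∀ a k : ℕ, a + k ≤ n → e (a + k) ≤ e a * α ^ k := by
    intro a k
    induction k with
    | zero => intro _; simp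
    | succ k ih =>
      intro hle
      have h1 : a + k ≤ n := by omega
      have hmem : a + k + 1 ∈ Finset.Icc 1 n := by
        simp only [Finset.mem_Icc]; omega
      have h2 := (hadm _ hmem).2
      have h3 : (a + k + 1) - 1 = a + k := by omega
      rw [h3] at h2
      calc e (a + (k+1)) = e (a + k + 1) := by ring_nf
        _ ≤ e (a + k) * α := h2
        _ ≤ (e a * α ^ k) * α := by
            exact mul_le_mul_of_nonneg_right (ih h1) (le_of_lt hα0)
        _ = e a * α ^ (k+1) := by ring
  -- downward decay bound
  have hdown : ∀ a k : ℕ, a + k ≤ n → e a ≤ e (a + k) * β ^ k := by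
    intro a k
    induction k with
    | zero => intro _; simp
    | succ k ih =>
      intro hle
      have h1 : a + k ≤ n := by omega
      have hmem : a + k + 1 ∈ Finset.Icc 1 n := by
        simp only [Finset.mem_Icc]; omega
      have h2 := (hadm _ hmem).1
      have h3 : (a + k + 1) - 1 = a + k := by omega
      rw [h3] at h2
      have h4 : e (a + k) ≤ e (a + k + 1) * β := by
        rw [div_le_iff₀ hβ0] at h2; linarith
      calc e a ≤ e (a + k) * β ^ k := ih h1
        _ ≤ (e (a + k + 1) * β) * β ^ k := by
            exact mul_le_mul_of_nonneg_right h4 (pow_nonneg (le_of_lt hβ0) k)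
        _ = e (a + (k+1)) * β ^ (k+1) := by ring_nf
  -- per-term key inequality
  have key : ∀ i ∈ Finset.Icc 1 n, e j * d j i ≤ α ^ j * e i := by
    intro i hi
    simp only [Finset.mem_Icc] at hi
    rw [hd]
    by_cases h : i ≤ j
    · simp only [if_pos h]
      have := hup i (j - i) (by omega)
      rw [show i + (j - i) = j by omega] at this
      calc e j * α ^ i ≤ (e i * α ^ (j - i)) * α ^ i := by
            exact mul_le_mul_of_nonneg_right this (pow_nonneg (le_of_lt hα0) i)
        _ = e i * (α ^ (j - i) * α ^ i) := by ring
        _ = α ^ j * e i := by rw [← pow_add, show j - i + i = j by omega]; ring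
    · simp only [if_neg h]
      have := hdown j (i - j) (by omega)
      rw [show j + (i - j) = i by omega] at this
      have hbp : (0:ℝ) < β ^ (i - j) := pow_pos hβ0 _
      rw [mul_div_assoc', div_le_iff₀ hbp]
      nlinarith [pow_nonneg (le_of_lt hα0) j]
  -- positivity of denominators
  obtain ⟨i0, hi0mem, hi0ne⟩ : ∃ i ∈ Finset.Icc 1 n, s i ≠ 0 := by
    by_contra h
    push_neg at h
    have : ∑ i ∈ Finset.Icc 1 n, s i = 0 := Finset.sum_eq_zero h
    rw [hs1] at this; norm_num at this
  have hi0pos : 0 < s i0 := lt_of_le_of_ne (hs0 _ hi0mem) (Ne.symm hi0ne)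
  have hdpos : ∀ i, 0 < d j i := by
    intro i
    rw [hd]
    split
    · exact pow_pos hα0 _
    · exact div_pos (pow_pos hα0 _) (pow_pos hβ0 _)
  have hSe : 0 < ∑ i ∈ Finset.Icc 1 n, s i * e i := by
    apply Finset.sum_pos'
    · intro i hi; exact mul_nonneg (hs0 i hi) (le_of_lt (hpos i hi))
    · exact ⟨i0, hi0mem, mul_pos hi0pos (hpos i0 hi0mem)⟩
  have hSd : 0 < ∑ i ∈ Finset.Icc 1 n, s i * d j i := by
    apply Finset.sum_pos'
    · intro i hi; exact mul_nonneg (hs0 i hi) (le_of_lt (hdpos i))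
    · exact ⟨i0, hi0mem, mul_pos hi0pos (hdpos i0)⟩
  rw [div_le_div_iff₀ hSe hSd]
  rw [Finset.mul_sum, Finset.mul_sum]
  apply Finset.sum_le_sum
  intro i hi
  have := mul_le_mul_of_nonneg_left (key i hi) (hs0 i hi)
  nlinarith [key i hi, hs0 i hi]
end

section
/- For the balanced strategy with weights b*_1 = α(β-1)/D, b*_n = (α-1)β/D, b*_i = (α-1)(β-1)/D for 1 < i < n (D = nαβ-(n-1)(α+β)+(n-2)), and for every downturn sequence e_j (with entries α^i for i ≤ j and α^j β^(j-i) for i > j), the ratio α^j / (∑_{i=1}^n b*_i (e_j)_i) equals r = D/(αβ-1), independent of j. -/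
/-!
Clearing the common denominator `D`, the balanced weights are `(α - 1)(β - 1)/D` everywhere plus
`(β - 1)/D` at `i = 1` and `(α - 1)/D` at `i = n`. Against the `j`-th downturn sequence `e`,
`(α - 1)(β - 1) ∑ eᵢ` is a sum of two geometric series, `(β - 1)(α^{j+1} - α)` from the rising part
and `(α - 1)(α^j - eₙ)` from the falling part; the endpoint terms `(β - 1) e₁ = (β - 1) α` and
`(α - 1) eₙ` cancel the leftovers, so `D ∑ bᵢ eᵢ = α^j (αβ - 1)` for every `j`.
-/

open Finset

noncomputable def balancedWeight (n : ℕ) (α β D : ℝ) (i : ℕ) : ℝ :=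
  if i = 1 then α * (β - 1) / D
  else if i = n then (α - 1) * β / D
  else (α - 1) * (β - 1) / D

noncomputable def downturn (α β : ℝ) (j i : ℕ) : ℝ :=
  if i ≤ j then α ^ i else α ^ j / β ^ (i - j)

theorem mul_sum_balancedWeight {n : ℕ} (hn : 2 ≤ n) {α β D : ℝ} (hD : D ≠ 0) (f : ℕ → ℝ) :
    D * ∑ i ∈ Icc 1 n, balancedWeight n α β D i * f i =
      (α - 1) * (β - 1) * ∑ i ∈ Icc 1 n, f i + (β - 1) * f 1 + (α - 1) * f n := by
  have hweight : ∀ i ∈ Icc 1 n, D * (balancedWeight n α β D i * f i) =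
      (α - 1) * (β - 1) * f i + (if i = 1 then (β - 1) * f 1 else 0)
        + (if i = n then (α - 1) * f n else 0) := by
    intro i _
    unfold balancedWeight
    split_ifs <;> first | omega | (subst_vars; field_simp; ring)
  rw [mul_sum, sum_congr rfl hweight, sum_add_distrib, sum_add_distrib, ← mul_sum,
    sum_ite_eq', sum_ite_eq', if_pos (by simp; omega), if_pos (by simp; omega)]

theorem sub_one_mul_sum_Ioc_pow {R : Type*} [CommRing R] (α : R) (j : ℕ) :
    (α - 1) * ∑ i ∈ Ioc 0 j, α ^ i = α ^ (j + 1) - α := by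
  induction j with
  | zero => simp
  | succ j ih =>
    rw [sum_Ioc_succ_top (Nat.zero_le j), mul_add, ih]
    ring

theorem sub_one_mul_sum_Ioc_div_pow {K : Type*} [Field K] {β : K} (hβ : β ≠ 0) (a : K) {j n : ℕ} (hjn : j ≤ n) :
    (β - 1) * ∑ i ∈ Ioc j n, a / β ^ (i - j) = a - a / β ^ (n - j) := by
  induction n, hjn using Nat.le_induction with
  | base => simp
  | succ n hjn ih =>
    rw [sum_Ioc_succ_top hjn, mul_add, ih, Nat.sub_add_comm hjn, pow_succ]
    field_simp
    ring

theorem downturn_balanced_combination {α β : ℝ} (hβ : β ≠ 0) {j n : ℕ} (hj : 1 ≤ j) (hjn : j ≤ n) :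
    (α - 1) * (β - 1) * ∑ i ∈ Icc 1 n, downturn α β j i
      + (β - 1) * downturn α β j 1 + (α - 1) * downturn α β j n = α ^ j * (α * β - 1) := by
  have hrise : ∑ i ∈ Ioc 0 j, downturn α β j i = ∑ i ∈ Ioc 0 j, α ^ i :=
    sum_congr rfl fun i hi => if_pos (mem_Ioc.mp hi).2
  have hfall : ∑ i ∈ Ioc j n, downturn α β j i = ∑ i ∈ Ioc j n, α ^ j / β ^ (i - j) :=
    sum_congr rfl fun i hi => if_neg (mem_Ioc.mp hi).1.not_ge
  have hlast : downturn α β j n = α ^ j / β ^ (n - j) := by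
    unfold downturn
    split_ifs with h
    · obtain rfl := le_antisymm hjn h
      simp
    · rfl
  rw [show Icc 1 n = Ioc 0 n from Icc_add_one_left_eq_Ioc 0 n,
    ← sum_Ioc_consecutive _ (Nat.zero_le j) hjn, hrise, hfall, hlast, downturn, if_pos hj]
  linear_combination (β - 1) * sub_one_mul_sum_Ioc_pow α j
    + (α - 1) * sub_one_mul_sum_Ioc_div_pow hβ (α ^ j) hjn

theorem balanced_equalizes (n : ℕ) (hn : 2 ≤ n) (α β : ℝ) (hα : 1 < α) (hβ : 1 < β)
    (D : ℝ) (hD : D = n * (α * β) - (n - 1) * (α + β) + (n - 2))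
    (b : ℕ → ℝ)
    (hb : ∀ i ∈ Finset.Icc 1 n, b i =
      if i = 1 then α * (β - 1) / D
      else if i = n then (α - 1) * β / D
      else (α - 1) * (β - 1) / D)
    (d : ℕ → ℕ → ℝ)
    (hd : ∀ j i, d j i = if i ≤ j then α ^ i else α ^ j / β ^ (i - j)) :
    ∀ j ∈ Finset.Icc 1 n,
      α ^ j / (∑ i ∈ Finset.Icc 1 n, b i * d j i) = D / (α * β - 1) := by
  intro j hj
  obtain ⟨hj1, hjn⟩ := mem_Icc.mp hj
  have hD_pos : 0 < D := by
    have hn' : (0 : ℝ) ≤ n := n.cast_nonneg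
    rw [hD]
    nlinarith [mul_nonneg hn' (mul_nonneg (sub_nonneg.2 hα.le) (sub_nonneg.2 hβ.le))]
  have hd' : d = downturn α β := funext fun j => funext (hd j)
  have hsum : D * ∑ i ∈ Icc 1 n, b i * d j i = α ^ j * (α * β - 1) := by
    have hb' : ∀ i ∈ Icc 1 n, b i * d j i = balancedWeight n α β D i * d j i :=
      fun i hi => by rw [hb i hi, balancedWeight]
    rw [sum_congr rfl hb', mul_sum_balancedWeight hn hD_pos.ne', hd',
      downturn_balanced_combination (by positivity) hj1 hjn]
  have hαβ : 0 < α * β - 1 := by nlinarith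
  have hS : ∑ i ∈ Icc 1 n, b i * d j i ≠ 0 :=
    right_ne_zero_of_mul (hsum ▸ (mul_pos (by positivity) hαβ).ne')
  rw [div_eq_div_iff hS hαβ.ne', ← hsum]
end

section
/- For any probability vector f ∈ ℝⁿ (f_i ≥ 0, ∑ f_i = 1), the worst-case ratio over downturns max_{1≤j≤n} α^j / (∑_{i=1}^n f_i (e_j)_i) is at least r = (nαβ - (n-1)(α+β) + (n-2))/(αβ-1), where (e_j)_i = α^i for i ≤ j and α^j β^(j-i) for i > j. -/
/-!
Normalise the `j`-th downturn by its final value `α ^ j`. Against the mixed downturn with weights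
`1` everywhere plus `1 / (β - 1)` on the first and `1 / (α - 1)` on the last downturn, every
static strategy earns the same normalised amount `c = β / (β - 1) + 1 / (α - 1)`: the unweighted
column sums are two truncated geometric series, and the extra end weights are exactly their
missing tails. Averaging over these weights, some downturn gives any strategy at most `c / W`,
where `W` is the total weight, and `W / c` is the claimed ratio.
-/

open Finset

theorem exists_payoff_le_of_equalizing_weights {ι κ : Type*} {s : Finset ι} {t : Finset κ}
    {w : ι → ℝ} {K : ι → κ → ℝ} {f : κ → ℝ} {c : ℝ} (hs : s.Nonempty)
    (hw : ∀ j ∈ s, 0 < w j) (hK : ∀ i ∈ t, ∑ j ∈ s, w j * K j i = c)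
    (hf : ∑ i ∈ t, f i = 1) :
    ∃ j ∈ s, ∑ i ∈ t, f i * K j i ≤ c / ∑ j ∈ s, w j := by
  have hW : 0 < ∑ j ∈ s, w j := sum_pos hw hs
  have hmix : ∑ j ∈ s, w j * ∑ i ∈ t, f i * K j i = ∑ j ∈ s, w j * (c / ∑ j ∈ s, w j) := by
    rw [← sum_mul, mul_div_cancel₀ _ hW.ne']
    simp_rw [mul_sum]
    rw [sum_comm]
    calc ∑ i ∈ t, ∑ j ∈ s, w j * (f i * K j i) = ∑ i ∈ t, f i * c :=
          sum_congr rfl fun i hi => by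
            rw [← hK i hi, mul_sum]
            exact sum_congr rfl fun j _ => by ring
      _ = c := by rw [← sum_mul, hf, one_mul]
  obtain ⟨j, hj, hle⟩ := exists_le_of_sum_le hs hmix.le
  exact ⟨j, hj, le_of_mul_le_mul_left hle (hw j hj)⟩

theorem sum_mul_pos_of_sum_eq_one {ι : Type*} {s : Finset ι} {f g : ι → ℝ}
    (hf0 : ∀ i ∈ s, 0 ≤ f i) (hf1 : ∑ i ∈ s, f i = 1) (hg : ∀ i ∈ s, 0 < g i) :
    0 < ∑ i ∈ s, f i * g i := by
  obtain ⟨i₀, hi₀, hfi₀⟩ := exists_lt_of_sum_lt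
    (show ∑ i ∈ s, (0 : ℝ) < ∑ i ∈ s, f i by rw [sum_const_zero, hf1]; exact one_pos)
  exact sum_pos' (fun i hi => mul_nonneg (hf0 i hi) (hg i hi).le)
    ⟨i₀, hi₀, mul_pos hfi₀ (hg i₀ hi₀)⟩

noncomputable def relDownturn (α β : ℝ) (j i : ℕ) : ℝ :=
  if i ≤ j then α⁻¹ ^ (j - i) else β⁻¹ ^ (i - j)

section Downturn

variable {α β : ℝ}

theorem downturn_eq_pow_mul_relDownturn (hα : α ≠ 0) (j i : ℕ) :
    downturn α β j i = α ^ j * relDownturn α β j i := by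
  unfold downturn relDownturn
  split_ifs with h
  · rw [inv_pow, ← div_eq_mul_inv, pow_sub₀ _ hα h, div_mul_cancel_left₀ (pow_ne_zero _ hα), inv_inv]
  · rw [inv_pow, div_eq_mul_inv]

theorem relDownturn_pos (hα : 0 < α) (hβ : 0 < β) (j i : ℕ) : 0 < relDownturn α β j i := by
  unfold relDownturn
  split_ifs <;> positivity

@[simp]
theorem relDownturn_self (i : ℕ) : relDownturn α β i i = 1 := by
  simp [relDownturn]

theorem relDownturn_succ_left {i j : ℕ} (h : i ≤ j) :
    relDownturn α β (j + 1) i = relDownturn α β j i * α⁻¹ := by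
  simp only [relDownturn, if_pos h, if_pos (h.trans j.le_succ), Nat.sub_add_comm h, pow_succ]

theorem relDownturn_succ_right {i j : ℕ} (h : j ≤ i) :
    relDownturn α β j (i + 1) = relDownturn α β j i * β⁻¹ := by
  unfold relDownturn
  rcases h.eq_or_lt with rfl | hlt
  · simp
  · rw [if_neg (by omega), if_neg (by omega), Nat.succ_sub h, pow_succ]

theorem sum_relDownturn_Icc_self (hβ : 1 < β) {i : ℕ} (hi : 1 ≤ i) :
    ∑ j ∈ Icc 1 i, relDownturn α β j i + relDownturn α β 1 i / (β - 1) = β / (β - 1) := by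
  have hβ1 : β - 1 ≠ 0 := sub_ne_zero.mpr hβ.ne'
  induction i, hi using Nat.le_induction with
  | base =>
    rw [Icc_self, sum_singleton, relDownturn_self]
    field_simp
    ring
  | succ i hi ih =>
    have hcol : ∑ j ∈ Icc 1 i, relDownturn α β j (i + 1)
        = (∑ j ∈ Icc 1 i, relDownturn α β j i) * β⁻¹ := by
      rw [sum_mul]
      exact sum_congr rfl fun j hj => relDownturn_succ_right (mem_Icc.mp hj).2
    rw [sum_Icc_succ_top (by omega), hcol, relDownturn_self, relDownturn_succ_right hi]
    linear_combination (norm := skip) β⁻¹ * ih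
    field_simp
    ring

theorem sum_relDownturn_Icc_add_ends (hα : 1 < α) (hβ : 1 < β) {i m : ℕ} (hi : 1 ≤ i)
    (him : i ≤ m) :
    ∑ j ∈ Icc 1 m, relDownturn α β j i + relDownturn α β 1 i / (β - 1)
      + relDownturn α β m i / (α - 1) = β / (β - 1) + 1 / (α - 1) := by
  have hα0 : α ≠ 0 := by positivity
  have hα1 : α - 1 ≠ 0 := sub_ne_zero.mpr hα.ne'
  induction m, him using Nat.le_induction with
  | base => rw [sum_relDownturn_Icc_self hβ hi, relDownturn_self]
  | succ m hm ih =>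
    rw [sum_Icc_succ_top (by omega), relDownturn_succ_left hm, ← ih]
    field_simp
    ring

noncomputable def downturnWeight (n : ℕ) (α β : ℝ) (j : ℕ) : ℝ :=
  1 + (if j = 1 then 1 / (β - 1) else 0) + (if j = n then 1 / (α - 1) else 0)

theorem downturnWeight_pos (hα : 1 < α) (hβ : 1 < β) (n j : ℕ) : 0 < downturnWeight n α β j := by
  have : 0 < α - 1 := sub_pos.mpr hα
  have : 0 < β - 1 := sub_pos.mpr hβ
  unfold downturnWeight
  split_ifs <;> positivity

theorem sum_downturnWeight {n : ℕ} (hn : 1 ≤ n) :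
    ∑ j ∈ Icc 1 n, downturnWeight n α β j = n + 1 / (β - 1) + 1 / (α - 1) := by
  have h1 : 1 ∈ Icc 1 n := mem_Icc.mpr ⟨le_rfl, hn⟩
  have hn' : n ∈ Icc 1 n := mem_Icc.mpr ⟨hn, le_rfl⟩
  simp only [downturnWeight, sum_add_distrib, sum_ite_eq', if_pos h1, if_pos hn', sum_const,
    Nat.card_Icc, add_tsub_cancel_right, nsmul_eq_mul, mul_one]

theorem sum_downturnWeight_mul_relDownturn (hα : 1 < α) (hβ : 1 < β) {n i : ℕ}
    (hi : i ∈ Icc 1 n) :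
    ∑ j ∈ Icc 1 n, downturnWeight n α β j * relDownturn α β j i
      = β / (β - 1) + 1 / (α - 1) := by
  obtain ⟨hi1, hin⟩ := mem_Icc.mp hi
  have h1 : 1 ∈ Icc 1 n := mem_Icc.mpr ⟨le_rfl, hi1.trans hin⟩
  have hn : n ∈ Icc 1 n := mem_Icc.mpr ⟨hi1.trans hin, le_rfl⟩
  rw [← sum_relDownturn_Icc_add_ends hα hβ hi1 hin]
  simp only [downturnWeight, add_mul, one_mul, ite_mul, zero_mul, sum_add_distrib, sum_ite_eq',
    if_pos h1, if_pos hn, div_mul_eq_mul_div, one_mul]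

theorem minimax_ratio_eq (hα : 1 < α) (hβ : 1 < β) (n : ℝ) :
    (n * (α * β) - (n - 1) * (α + β) + (n - 2)) / (α * β - 1)
      = (n + 1 / (β - 1) + 1 / (α - 1)) / (β / (β - 1) + 1 / (α - 1)) := by
  have hα1 : α - 1 ≠ 0 := sub_ne_zero.mpr hα.ne'
  have hβ1 : β - 1 ≠ 0 := sub_ne_zero.mpr hβ.ne'
  have hαβ : α * β - 1 ≠ 0 := by nlinarith
  have hc : β / (β - 1) + 1 / (α - 1) = (α * β - 1) / ((α - 1) * (β - 1)) := by
    field_simp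
    ring
  rw [hc, div_div_eq_mul_div]
  field_simp
  ring

end Downturn

theorem minimax_lower_bound_general (n : ℕ) (α β : ℝ) (hα : 1 < α) (hβ : 1 < β)
    (f : ℕ → ℝ) (hf0 : ∀ i ∈ Finset.Icc 1 n, 0 ≤ f i)
    (hf1 : ∑ i ∈ Finset.Icc 1 n, f i = 1)
    (d : ℕ → ℕ → ℝ)
    (hd : ∀ j i, d j i = if i ≤ j then α ^ i else α ^ j / β ^ (i - j)) :
    ∃ j ∈ Finset.Icc 1 n,
      (n * (α * β) - (n - 1) * (α + β) + (n - 2)) / (α * β - 1) ≤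
        α ^ j / ∑ i ∈ Finset.Icc 1 n, f i * d j i := by
  obtain rfl : d = downturn α β := funext fun j => funext (hd j)
  have hne : (Icc 1 n).Nonempty := nonempty_of_sum_ne_zero (hf1 ▸ one_ne_zero)
  have hα0 : 0 < α := by positivity
  obtain ⟨j, hj, hle⟩ := exists_payoff_le_of_equalizing_weights hne
    (fun j _ => downturnWeight_pos hα hβ n j)
    (fun i hi => sum_downturnWeight_mul_relDownturn hα hβ hi) hf1
  have hpos : 0 < ∑ i ∈ Icc 1 n, f i * relDownturn α β j i :=
    sum_mul_pos_of_sum_eq_one hf0 hf1 fun i _ => relDownturn_pos hα0 (by positivity) j i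
  refine ⟨j, hj, ?_⟩
  calc (n * (α * β) - (n - 1) * (α + β) + (n - 2)) / (α * β - 1)
      = 1 / ((β / (β - 1) + 1 / (α - 1)) / ∑ j ∈ Icc 1 n, downturnWeight n α β j) := by
        rw [sum_downturnWeight ((mem_Icc.mp hj).1.trans (mem_Icc.mp hj).2), one_div_div,
          minimax_ratio_eq hα hβ]
    _ ≤ 1 / ∑ i ∈ Icc 1 n, f i * relDownturn α β j i := one_div_le_one_div_of_le hpos hle
    _ = α ^ j / ∑ i ∈ Icc 1 n, f i * downturn α β j i := by
        simp_rw [downturn_eq_pow_mul_relDownturn hα0.ne', mul_left_comm _ (α ^ j), ← mul_sum]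
        rw [div_mul_cancel_left₀ (pow_ne_zero _ hα0.ne'), one_div]

theorem minimax_lower_bound (n : ℕ) (hn : 2 ≤ n) (α β : ℝ) (hα : 1 < α) (hβ : 1 < β)
    (f : ℕ → ℝ) (hf0 : ∀ i ∈ Finset.Icc 1 n, 0 ≤ f i)
    (hf1 : ∑ i ∈ Finset.Icc 1 n, f i = 1)
    (d : ℕ → ℕ → ℝ)
    (hd : ∀ j i, d j i = if i ≤ j then α ^ i else α ^ j / β ^ (i - j)) :
    ∃ j ∈ Finset.Icc 1 n,
      (n * (α * β) - (n - 1) * (α + β) + (n - 2)) / (α * β - 1) ≤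
        α ^ j / ∑ i ∈ Finset.Icc 1 n, f i * d j i :=
  minimax_lower_bound_general n α β hα hβ f hf0 hf1 d hd
end

section
/- If a probability vector f ∈ ℝⁿ satisfies max_{1≤j≤n} α^j / (∑_{i=1}^n f_i (e_j)_i) = r with r = (nαβ-(n-1)(α+β)+(n-2))/(αβ-1), then f equals the balanced strategy weights b* (b*_1 = α(β-1)/D, b*_n = (α-1)β/D, b*_i = (α-1)(β-1)/D otherwise, D = nαβ-(n-1)(α+β)+(n-2)). -/
/-!
Write `d j i` for the `i`-th entry of the `j`-th downturn and `S j = ∑ i, f i * d j i`.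
The adversary's mixed strategy `w j = e j / α ^ j`, with `e 1 = (α - 1) β`, `e n = α (β - 1)` and
`e j = (α - 1) (β - 1)` otherwise, is a dual certificate: every column of `d` has `w`-weighted
sum `α β - 1`, and `∑ j, w j * α ^ j = D`. For a probability vector `f` this gives
`∑ j, w j * S j = α β - 1 = ∑ j, w j * (α ^ j * (α β - 1) / D)`, while the ratio bound says
`S j ≥ α ^ j * (α β - 1) / D`; as all `w j > 0`, every `S j` is equal to that bound.
Finally `d (j + 1) - α β d j = (1 - α β) (α ^ i * [i ≤ j])ᵢ`, so these equalities determine the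
prefix sums `∑ i ≤ j, f i * α ^ i`, and hence `f`.
-/

open Finset

lemma eq_of_sum_mul_eq_of_le {ι K : Type*} [Field K] [LinearOrder K] [IsStrictOrderedRing K]
    {s : Finset ι} {w a b : ι → K} (hw : ∀ j ∈ s, 0 < w j) (hab : ∀ j ∈ s, a j ≤ b j)
    (h : ∑ j ∈ s, w j * a j = ∑ j ∈ s, w j * b j) : ∀ j ∈ s, a j = b j := fun j hj =>
  mul_left_cancel₀ (hw j hj).ne'
    ((sum_eq_sum_iff_of_le fun k hk => mul_le_mul_of_nonneg_left (hab k hk) (hw k hk).le).1 h j hj)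

noncomputable def payoff (n : ℕ) (α β : ℝ) (f : ℕ → ℝ) (j : ℕ) : ℝ :=
  ∑ i ∈ Icc 1 n, f i * downturn α β j i

noncomputable def adversaryWeight (n : ℕ) (α β : ℝ) (j : ℕ) : ℝ :=
  ((α - 1) * (β - 1) + (if j = 1 then α - 1 else 0) + (if j = n then β - 1 else 0)) / α ^ j

noncomputable def balancedStrategy (n : ℕ) (α β D : ℝ) (i : ℕ) : ℝ :=
  if i = 1 then α * (β - 1) / D
  else if i = n then (α - 1) * β / D
  else (α - 1) * (β - 1) / D

section
variable {n : ℕ} {α β : ℝ}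

lemma downturn_pos (hα : 0 < α) (hβ : 0 < β) (j i : ℕ) : 0 < downturn α β j i := by
  unfold downturn; split_ifs <;> positivity

lemma downturn_of_le {j i : ℕ} (h : i ≤ j) : downturn α β j i = α ^ i := if_pos h

lemma downturn_of_lt {j i : ℕ} (hβ : β ≠ 0) (h : j < i) :
    downturn α β j i = α ^ j * β ^ j / β ^ i := by
  rw [downturn, if_neg h.not_ge, ← Nat.sub_add_cancel h.le, pow_add, Nat.add_sub_cancel]
  field_simp

lemma downturn_one (hβ : β ≠ 0) {i : ℕ} (hi : 1 ≤ i) : downturn α β 1 i = α * β / β ^ i := by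
  rcases hi.eq_or_lt with rfl | hi
  · simp [downturn_of_le, hβ]
  · simp [downturn_of_lt hβ hi]

lemma downturn_succ_sub_mul (hβ : β ≠ 0) (j i : ℕ) :
    downturn α β (j + 1) i - α * β * downturn α β j i =
      if i ≤ j then (1 - α * β) * α ^ i else 0 := by
  rcases le_or_gt i j with h | h
  · rw [if_pos h, downturn_of_le h, downturn_of_le (by omega)]; ring
  · rw [if_neg h.not_ge, downturn_of_lt hβ h]
    rcases (show j + 1 ≤ i by omega).eq_or_lt with rfl | h'
    · rw [downturn_of_le le_rfl]; field_simp; ring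
    · rw [downturn_of_lt hβ h']; field_simp; ring

lemma sum_Ico_downturn_div_pow_mul (hα : α ≠ 0) (hβ : β ≠ 0) {i : ℕ} (hi : 1 ≤ i) :
    (∑ j ∈ Ico 1 i, downturn α β j i / α ^ j) * (β - 1) = 1 - β / β ^ i := by
  have hterm : ∀ j ∈ Ico 1 i, downturn α β j i / α ^ j = β ^ j / β ^ i := fun j hj => by
    rw [downturn_of_lt hβ (mem_Ico.1 hj).2]; field_simp
  rw [sum_congr rfl hterm, ← sum_div, div_mul_eq_mul_div, geom_sum_Ico_mul β hi]
  field_simp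

lemma sum_Icc_downturn_div_pow_mul (hα : α ≠ 0) {i : ℕ} (hi : i ≤ n) :
    (∑ j ∈ Icc i n, downturn α β j i / α ^ j) * (α - 1) = α - α ^ i / α ^ n := by
  have hterm : ∀ j ∈ Icc i n, downturn α β j i / α ^ j = α ^ i * α⁻¹ ^ j := fun j hj => by
    rw [downturn_of_le (mem_Icc.1 hj).1, inv_pow, div_eq_mul_inv]
  have hgeom := geom_sum_Ico_mul_neg α⁻¹ (show i ≤ n + 1 by omega)
  rw [Ico_add_one_right_eq_Icc] at hgeom
  rw [sum_congr rfl hterm, ← mul_sum]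
  have hα1 : α - 1 = α * (1 - α⁻¹) := by field_simp
  rw [hα1, show α ^ i * (∑ j ∈ Icc i n, α⁻¹ ^ j) * (α * (1 - α⁻¹)) =
    α ^ i * α * ((∑ j ∈ Icc i n, α⁻¹ ^ j) * (1 - α⁻¹)) by ring, hgeom, inv_pow, inv_pow, pow_succ]
  field_simp

lemma sum_downturn_div_pow_mul (hα : α ≠ 0) (hβ : β ≠ 0) {i : ℕ} (hi : i ∈ Icc 1 n) :
    (∑ j ∈ Icc 1 n, downturn α β j i / α ^ j) * ((α - 1) * (β - 1)) =
      (α - 1) * (1 - β / β ^ i) + (β - 1) * (α - α ^ i / α ^ n) := by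
  obtain ⟨hi1, hin⟩ := mem_Icc.1 hi
  rw [← Ico_add_one_right_eq_Icc, ← sum_Ico_consecutive _ hi1 (by omega : i ≤ n + 1),
    Ico_add_one_right_eq_Icc, add_mul, ← sum_Ico_downturn_div_pow_mul hα hβ hi1,
    ← sum_Icc_downturn_div_pow_mul hα hin]
  ring

lemma adversaryWeight_pos (hα : 1 < α) (hβ : 1 < β) (j : ℕ) : 0 < adversaryWeight n α β j := by
  have : 0 < (α - 1) * (β - 1) := mul_pos (by linarith) (by linarith)
  unfold adversaryWeight
  split_ifs <;> exact div_pos (by linarith) (by positivity)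

lemma sum_adversaryWeight_mul_pow (hα : α ≠ 0) (hn : 1 ≤ n) :
    ∑ j ∈ Icc 1 n, adversaryWeight n α β j * α ^ j =
      n * (α * β) - (n - 1) * (α + β) + (n - 2) := by
  simp only [adversaryWeight, div_mul_cancel₀ _ (pow_ne_zero _ hα), sum_add_distrib,
    sum_ite_eq', mem_Icc, le_refl, hn, and_self, sum_const, Nat.card_Icc, nsmul_eq_mul]
  push_cast
  ring

lemma sum_adversaryWeight_mul_downturn (hα : α ≠ 0) (hβ : β ≠ 0) {i : ℕ} (hi : i ∈ Icc 1 n) :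
    ∑ j ∈ Icc 1 n, adversaryWeight n α β j * downturn α β j i = α * β - 1 := by
  obtain ⟨hi1, hin⟩ := mem_Icc.1 hi
  have hG := sum_downturn_div_pow_mul hα hβ hi
  simp only [adversaryWeight, add_div, add_mul, sum_add_distrib, ite_div, zero_div, ite_mul,
    zero_mul, sum_ite_eq', mem_Icc, le_refl, hi1.trans hin, and_self, if_true]
  have hsplit : ∑ j ∈ Icc 1 n, (α - 1) * (β - 1) / α ^ j * downturn α β j i =
      (∑ j ∈ Icc 1 n, downturn α β j i / α ^ j) * ((α - 1) * (β - 1)) := by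
    rw [sum_mul]; exact sum_congr rfl fun _ _ => by ring
  rw [hsplit, hG, downturn_one hβ hi1, downturn_of_le hin]
  field_simp
  ring

lemma sum_adversaryWeight_mul_payoff (hα : α ≠ 0) (hβ : β ≠ 0) (f : ℕ → ℝ) :
    ∑ j ∈ Icc 1 n, adversaryWeight n α β j * payoff n α β f j =
      (α * β - 1) * ∑ i ∈ Icc 1 n, f i := by
  simp only [payoff, mul_sum, mul_left_comm (adversaryWeight n α β _) (f _)]
  rw [sum_comm]
  refine sum_congr rfl fun i hi => ?_
  rw [← mul_sum, sum_adversaryWeight_mul_downturn hα hβ hi, mul_comm]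

lemma payoff_succ_sub_mul (hβ : β ≠ 0) (f : ℕ → ℝ) {j : ℕ} (hj : j ≤ n) :
    payoff n α β f (j + 1) - α * β * payoff n α β f j =
      (1 - α * β) * ∑ i ∈ Icc 1 j, f i * α ^ i := by
  have hfilter : (Icc 1 n).filter (· ≤ j) = Icc 1 j := by
    ext i; simp only [mem_filter, mem_Icc]; omega
  simp only [payoff, mul_sum, ← sum_sub_distrib, mul_left_comm _ (f _), ← mul_sub,
    downturn_succ_sub_mul hβ, mul_ite, mul_zero, ← sum_filter, hfilter]

lemma payoff_self (f : ℕ → ℝ) : payoff n α β f n = ∑ i ∈ Icc 1 n, f i * α ^ i :=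
  sum_congr rfl fun i hi => by rw [downturn_of_le (mem_Icc.1 hi).2]

lemma payoff_pos (hα : 0 < α) (hβ : 0 < β) {f : ℕ → ℝ} (hf0 : ∀ i ∈ Icc 1 n, 0 ≤ f i)
    (hf1 : ∑ i ∈ Icc 1 n, f i = 1) (j : ℕ) : 0 < payoff n α β f j := by
  obtain ⟨i, hi, hfi⟩ : ∃ i ∈ Icc 1 n, 0 < f i :=
    exists_lt_of_sum_lt (by rw [hf1, sum_const_zero]; exact one_pos)
  exact sum_pos' (fun k hk => mul_nonneg (hf0 k hk) (downturn_pos hα hβ j k).le)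
    ⟨i, hi, mul_pos hfi (downturn_pos hα hβ j i)⟩

lemma eq_balancedStrategy_of_payoff_eq {D : ℝ} (hn : 2 ≤ n) (hα : α ≠ 0) (hβ : β ≠ 0)
    (hαβ : α * β ≠ 1) {f : ℕ → ℝ}
    (h : ∀ j ∈ Icc 1 n, payoff n α β f j = α ^ j * (α * β - 1) / D) :
    ∀ i ∈ Icc 1 n, f i = balancedStrategy n α β D i := by
  have hprefix : ∀ j, 1 ≤ j → j < n → ∑ i ∈ Icc 1 j, f i * α ^ i = α ^ (j + 1) * (β - 1) / D := by
    intro j hj hjn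
    have hrec := payoff_succ_sub_mul (α := α) hβ f hjn.le
    rw [h j (mem_Icc.2 ⟨hj, hjn.le⟩), h (j + 1) (mem_Icc.2 ⟨by omega, hjn⟩)] at hrec
    have h1 : 1 - α * β ≠ 0 := sub_ne_zero.2 (Ne.symm hαβ)
    apply mul_left_cancel₀ h1
    rw [← hrec]
    ring
  have hfull := (payoff_self (α := α) (β := β) f).symm.trans (h n (mem_Icc.2 ⟨by omega, le_rfl⟩))
  intro i hi
  obtain ⟨hi1, hin⟩ := mem_Icc.1 hi
  apply mul_right_cancel₀ (pow_ne_zero i hα)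
  unfold balancedStrategy
  split_ifs with h1 hn'
  · subst h1
    have hP1 := hprefix 1 le_rfl (by omega)
    rw [Icc_self, sum_singleton] at hP1
    rw [hP1]; ring
  · subst hn'
    obtain ⟨k, rfl⟩ : ∃ k, i = k + 1 := ⟨i - 1, by omega⟩
    rw [sum_Icc_succ_top (by omega), hprefix k (by omega) (by omega)] at hfull
    linear_combination hfull
  · obtain ⟨k, rfl⟩ : ∃ k, i = k + 1 := ⟨i - 1, by omega⟩
    have hPi := hprefix (k + 1) hi1 (by omega)
    rw [sum_Icc_succ_top (by omega), hprefix k (by omega) (by omega)] at hPi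
    linear_combination hPi

end

theorem optimal_static_unique_general (n : ℕ) (hn : 2 ≤ n) (α β : ℝ) (hα : 1 < α) (hβ : 1 < β)
    (D : ℝ) (hD : D = n * (α * β) - (n - 1) * (α + β) + (n - 2))
    (f : ℕ → ℝ) (hf0 : ∀ i ∈ Finset.Icc 1 n, 0 ≤ f i)
    (hf1 : ∑ i ∈ Finset.Icc 1 n, f i = 1)
    (d : ℕ → ℕ → ℝ)
    (hd : ∀ j i, d j i = if i ≤ j then α ^ i else α ^ j / β ^ (i - j))
    (hle : ∀ j ∈ Finset.Icc 1 n,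
      α ^ j / ∑ i ∈ Finset.Icc 1 n, f i * d j i ≤ D / (α * β - 1)) :
    ∀ i ∈ Finset.Icc 1 n, f i =
      if i = 1 then α * (β - 1) / D
      else if i = n then (α - 1) * β / D
      else (α - 1) * (β - 1) / D := by
  obtain rfl : d = downturn α β := funext fun j => funext (hd j)
  have hα0 : 0 < α := by linarith
  have hβ0 : 0 < β := by linarith
  have hαβ : 0 < α * β - 1 := by nlinarith
  have hweights : ∑ j ∈ Icc 1 n, adversaryWeight n α β j * α ^ j = D :=
    (sum_adversaryWeight_mul_pow hα0.ne' (by omega)).trans hD.symm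
  have hDpos : 0 < D := hweights ▸ sum_pos
    (fun j _ => mul_pos (adversaryWeight_pos hα hβ j) (by positivity)) (nonempty_Icc.2 (by omega))
  have hlower : ∀ j ∈ Icc 1 n, α ^ j * (α * β - 1) / D ≤ payoff n α β f j := fun j hj => by
    have : α ^ j / payoff n α β f j ≤ D / (α * β - 1) := hle j hj
    rw [div_le_div_iff₀ (payoff_pos hα0 hβ0 hf0 hf1 j) hαβ] at this
    rw [div_le_iff₀ hDpos]
    linarith
  have hdual : ∑ j ∈ Icc 1 n, adversaryWeight n α β j * (α ^ j * (α * β - 1) / D) =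
      ∑ j ∈ Icc 1 n, adversaryWeight n α β j * payoff n α β f j := by
    rw [sum_adversaryWeight_mul_payoff hα0.ne' hβ0.ne', hf1, mul_one]
    simp only [← mul_div_assoc, ← mul_assoc, ← sum_div, ← sum_mul, hweights]
    field_simp
  refine eq_balancedStrategy_of_payoff_eq hn hα0.ne' hβ0.ne' (sub_ne_zero.1 hαβ.ne') fun j hj => ?_
  exact (eq_of_sum_mul_eq_of_le (fun j _ => adversaryWeight_pos hα hβ j) hlower hdual j hj).symm

theorem optimal_static_unique (n : ℕ) (hn : 2 ≤ n) (α β : ℝ) (hα : 1 < α) (hβ : 1 < β)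
    (D : ℝ) (hD : D = n * (α * β) - (n - 1) * (α + β) + (n - 2))
    (f : ℕ → ℝ) (hf0 : ∀ i ∈ Finset.Icc 1 n, 0 ≤ f i)
    (hf1 : ∑ i ∈ Finset.Icc 1 n, f i = 1)
    (d : ℕ → ℕ → ℝ)
    (hd : ∀ j i, d j i = if i ≤ j then α ^ i else α ^ j / β ^ (i - j))
    (hle : ∀ j ∈ Finset.Icc 1 n,
      α ^ j / ∑ i ∈ Finset.Icc 1 n, f i * d j i ≤ D / (α * β - 1))
    (heq : ∃ j ∈ Finset.Icc 1 n,
      α ^ j / ∑ i ∈ Finset.Icc 1 n, f i * d j i = D / (α * β - 1)) :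
    ∀ i ∈ Finset.Icc 1 n, f i =
      if i = 1 then α * (β - 1) / D
      else if i = n then (α - 1) * β / D
      else (α - 1) * (β - 1) / D :=
  optimal_static_unique_general n hn α β hα hβ D hD f hf0 hf1 d hd hle
end

section
/- For n ≥ 2 and α, β > 1, the competitive ratio of the dollar averaging strategy (investing 1/n each day) over the downturn sequences equals max{ n(1-α⁻¹)/(1-α⁻ⁿ), n(1-β⁻¹)/(1-β⁻ⁿ) }. That is, max_{1≤j≤n} n/B_j = max{ n(1-α⁻¹)/(1-α⁻ⁿ), n(1-β⁻¹)/(1-β⁻ⁿ) }, where B_j = ∑_{i=1}^n K(i,j) with K(i,j) = α^(i-j) for i ≤ j and β^(j-i) for i > j. -/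
/-!
Write `a = α⁻¹`, `b = β⁻¹` and `j = p + 1`, `n = p + q + 1`. Then
`B j = 1 + (a + ⋯ + a^p) + (b + ⋯ + b^q)`, so `B n` and `B 1` are the geometric sums
`∑_{k<n} a^k` and `∑_{k<n} b^k`. Moving from `(p, q)` towards `(p + q, 0)` changes `B` by
`a^(p+1) - b^q, a^(p+2) - b^(q-1), …`, a decreasing sequence, so `j ↦ B j` is discretely concave
and `min (B n) (B 1) ≤ B j`. Hence `max_j n / B j = max (n / B n) (n / B 1)`, and the geometric
sum formula gives the closed form.
-/

open Finset

noncomputable def downturnKernel (α β : ℝ) (i j : ℕ) : ℝ :=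
  if i ≤ j then α ^ ((i : ℤ) - (j : ℤ)) else β ^ ((j : ℤ) - (i : ℤ))

lemma downturnKernel_of_le {α β : ℝ} {i j : ℕ} (h : i ≤ j) :
    downturnKernel α β i j = α⁻¹ ^ (j - i) := by
  rw [downturnKernel, if_pos h, show (i : ℤ) - j = -((j - i : ℕ) : ℤ) by omega,
    zpow_neg, zpow_natCast, inv_pow]

lemma downturnKernel_of_lt {α β : ℝ} {i j : ℕ} (h : j < i) :
    downturnKernel α β i j = β⁻¹ ^ (i - j) := by
  rw [downturnKernel, if_neg h.not_ge, show (j : ℤ) - i = -((i - j : ℕ) : ℤ) by omega,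
    zpow_neg, zpow_natCast, inv_pow]

lemma sum_downturnKernel (α β : ℝ) (p q : ℕ) :
    ∑ i ∈ Icc 1 (p + q + 1), downturnKernel α β i (p + 1) =
      1 + (∑ k ∈ range p, α⁻¹ ^ (k + 1) + ∑ k ∈ range q, β⁻¹ ^ (k + 1)) := by
  rw [← Ico_add_one_right_eq_Icc, sum_Ico_eq_sum_range,
    show p + q + 1 + 1 - 1 = (p + 1) + q by omega, sum_range_add]
  have below : ∑ k ∈ range (p + 1), downturnKernel α β (1 + k) (p + 1) =
      ∑ k ∈ range (p + 1), α⁻¹ ^ k := by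
    rw [← sum_range_reflect]
    refine sum_congr rfl fun k hk => ?_
    rw [mem_range] at hk
    rw [downturnKernel_of_le (by omega)]
    congr 1
    omega
  have above : ∑ k ∈ range q, downturnKernel α β (1 + (p + 1 + k)) (p + 1) =
      ∑ k ∈ range q, β⁻¹ ^ (k + 1) :=
    sum_congr rfl fun k _ => by rw [downturnKernel_of_lt (by omega)]; congr 1; omega
  rw [below, above, sum_range_succ', pow_zero]
  ring

lemma sum_pow_succ_le_of_pow_succ_le {a b : ℝ} (ha₀ : 0 ≤ a) (ha₁ : a ≤ 1)
    (hb₀ : 0 ≤ b) (hb₁ : b ≤ 1) {p q : ℕ} (h : a ^ (p + 1) ≤ b ^ q) :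
    ∑ k ∈ range (p + q), a ^ (k + 1) ≤
      ∑ k ∈ range p, a ^ (k + 1) + ∑ k ∈ range q, b ^ (k + 1) := by
  rw [sum_range_add]
  gcongr with k hk
  rw [mem_range] at hk
  calc a ^ (p + k + 1) ≤ a ^ (p + 1) := pow_le_pow_of_le_one ha₀ ha₁ (by omega)
    _ ≤ b ^ q := h
    _ ≤ b ^ (k + 1) := pow_le_pow_of_le_one hb₀ hb₁ hk

lemma min_sum_pow_succ_le {a b : ℝ} (ha₀ : 0 ≤ a) (ha₁ : a ≤ 1)
    (hb₀ : 0 ≤ b) (hb₁ : b ≤ 1) (p q : ℕ) :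
    min (∑ k ∈ range (p + q), a ^ (k + 1)) (∑ k ∈ range (p + q), b ^ (k + 1)) ≤
      ∑ k ∈ range p, a ^ (k + 1) + ∑ k ∈ range q, b ^ (k + 1) := by
  rcases le_or_gt (a ^ (p + 1)) (b ^ q) with h | h
  · exact min_le_of_left_le (sum_pow_succ_le_of_pow_succ_le ha₀ ha₁ hb₀ hb₁ h)
  · have h' : b ^ (q + 1) ≤ a ^ p :=
      calc b ^ (q + 1) ≤ b ^ q := pow_le_pow_of_le_one hb₀ hb₁ (by omega)
        _ ≤ a ^ (p + 1) := h.le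
        _ ≤ a ^ p := pow_le_pow_of_le_one ha₀ ha₁ (by omega)
    refine min_le_of_right_le ?_
    rw [add_comm p, add_comm (∑ k ∈ range p, _)]
    exact sum_pow_succ_le_of_pow_succ_le hb₀ hb₁ ha₀ ha₁ h'

lemma div_geom_sum {x : ℝ} (hx : x ≠ 1) (c : ℝ) (n : ℕ) :
    c / ∑ k ∈ range n, x ^ k = c * (1 - x) / (1 - x ^ n) := by
  rw [geom_sum_eq hx, div_div_eq_mul_div, ← neg_sub 1 x, ← neg_sub 1 (x ^ n), mul_neg,
    neg_div_neg_eq]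

lemma div_le_max_div_of_min_le {c x y z : ℝ} (hc : 0 ≤ c) (hx : 0 < x) (hy : 0 < y)
    (hz : min x y ≤ z) : c / z ≤ max (c / x) (c / y) := by
  rcases min_choice x y with h | h <;> rw [h] at hz
  · exact le_max_of_le_left (div_le_div_of_nonneg_left hc hx hz)
  · exact le_max_of_le_right (div_le_div_of_nonneg_left hc hy hz)

lemma Finset.sup'_eq_max_of_le {ι α : Type*} [LinearOrder α] {s : Finset ι} (hs : s.Nonempty)
    {f : ι → α} {i j : ι} (hi : i ∈ s) (hj : j ∈ s)
    (h : ∀ k ∈ s, f k ≤ max (f i) (f j)) :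
    s.sup' hs f = max (f i) (f j) :=
  le_antisymm (sup'_le hs f h) (max_le (le_sup' f hi) (le_sup' f hj))

theorem dollar_averaging_ratio (n : ℕ) (hn : 2 ≤ n) (α β : ℝ) (hα : 1 < α) (hβ : 1 < β)
    (B : ℕ → ℝ)
    (hB : ∀ j, B j = ∑ i ∈ Finset.Icc 1 n,
      (if i ≤ j then α ^ ((i : ℤ) - (j : ℤ)) else β ^ ((j : ℤ) - (i : ℤ)))) :
    (Finset.Icc 1 n).sup' (Finset.nonempty_Icc.mpr (by omega)) (fun j => (n : ℝ) / B j) =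
      max ((n : ℝ) * (1 - α⁻¹) / (1 - α⁻¹ ^ n)) ((n : ℝ) * (1 - β⁻¹) / (1 - β⁻¹ ^ n)) := by
  have hsplit : ∀ p q, p + q + 1 = n →
      B (p + 1) = 1 + (∑ k ∈ range p, α⁻¹ ^ (k + 1) + ∑ k ∈ range q, β⁻¹ ^ (k + 1)) := by
    intro p q h
    rw [hB, ← h]
    exact sum_downturnKernel α β p q
  have hBn : B n = ∑ k ∈ range n, α⁻¹ ^ k := by
    obtain ⟨m, rfl⟩ : ∃ m, n = m + 1 := ⟨n - 1, by omega⟩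
    simp [hsplit m 0 (by omega), sum_range_succ', add_comm]
  have hB1 : B 1 = ∑ k ∈ range n, β⁻¹ ^ k := by
    obtain ⟨m, rfl⟩ : ∃ m, n = m + 1 := ⟨n - 1, by omega⟩
    simp [hsplit 0 m (by omega), sum_range_succ', add_comm]
  have hmin : ∀ j ∈ Icc 1 n, min (B n) (B 1) ≤ B j := by
    intro j hj
    obtain ⟨p, q, rfl, rfl⟩ : ∃ p q, j = p + 1 ∧ n = p + q + 1 :=
      ⟨j - 1, n - j, by grind, by grind⟩
    rw [hsplit p q rfl, hsplit (p + q) 0 rfl, show B 1 = B (0 + 1) from rfl,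
      hsplit 0 (p + q) (by omega), min_add_add_left]
    simpa using min_sum_pow_succ_le (by positivity) (inv_le_one_of_one_le₀ hα.le)
      (by positivity) (inv_le_one_of_one_le₀ hβ.le) p q
  have hpos : ∀ {x : ℝ}, 1 < x → 0 < ∑ k ∈ range n, x⁻¹ ^ k := fun hx =>
    sum_pos (fun _ _ => by positivity) (nonempty_range_iff.mpr (by omega))
  rw [← div_geom_sum (inv_lt_one_of_one_lt₀ hα).ne,
    ← div_geom_sum (inv_lt_one_of_one_lt₀ hβ).ne, ← hBn, ← hB1]
  refine sup'_eq_max_of_le _ (mem_Icc.mpr ⟨by omega, le_rfl⟩)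
    (mem_Icc.mpr ⟨le_rfl, by omega⟩) fun j hj => ?_
  exact div_le_max_div_of_min_le (by positivity) (hBn ▸ hpos hα) (hB1 ▸ hpos hβ) (hmin j hj)
end

section
/- The inverse of K satisfies uᵀK⁻¹ = b̄ᵀ and K⁻¹u = c̄, where b̄_1 = α(β-1)/(αβ-1), b̄_n = (α-1)β/(αβ-1), b̄_i = (α-1)(β-1)/(αβ-1) otherwise, and c̄ is obtained from b̄ by swapping the first and last components; here u is the all-ones vector. -/
/-!
Write `K i j = g (j - i)` for the two-sided geometric sequence `g d = α ^ (-d)` (`d ≥ 0`),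
`g d = β ^ d` (`d ≤ 0`). It satisfies the three-term recurrence
`(α β + 1) g d - β g (d - 1) - α g (d + 1) = (α β - 1) [d = 0]`, and on a half-line, where one
neighbour is missing, the same recurrence with diagonal coefficient `α β`. So `(α β - 1) K⁻¹` is
the tridiagonal matrix with diagonal `α β + 1` (`α β` in the two corners), superdiagonal `-β`
and subdiagonal `-α`, and the row and column sums of `K⁻¹` can be read off from it.
-/

open Finset Matrix

variable {𝕜 : Type*} [Field 𝕜] {α β : 𝕜}

def geomKernel (α β : 𝕜) (d : ℤ) : 𝕜 := if 0 ≤ d then α ^ (-d) else β ^ d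

lemma geomKernel_of_nonneg {d : ℤ} (hd : 0 ≤ d) : geomKernel α β d = α ^ (-d) := if_pos hd

lemma geomKernel_of_nonpos {d : ℤ} (hd : d ≤ 0) : geomKernel α β d = β ^ d := by
  rcases hd.eq_or_lt with rfl | hd
  · simp [geomKernel]
  · exact if_neg (not_le.2 hd)

lemma geomKernel_first_row (hα : α ≠ 0) (hβ : β ≠ 0) {d : ℤ} (hd : 0 ≤ d) :
    α * β * geomKernel α β d - β * geomKernel α β (d - 1) = if d = 0 then α * β - 1 else 0 := by
  rcases hd.eq_or_lt with rfl | hd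
  · norm_num [geomKernel_of_nonneg, geomKernel_of_nonpos, hβ]
  · rw [geomKernel_of_nonneg hd.le, geomKernel_of_nonneg (by omega), if_neg hd.ne',
      show -(d - 1) = -d + 1 by ring, zpow_add_one₀ hα]
    ring

lemma geomKernel_last_row (hα : α ≠ 0) (hβ : β ≠ 0) {d : ℤ} (hd : d ≤ 0) :
    α * β * geomKernel α β d - α * geomKernel α β (d + 1) = if d = 0 then α * β - 1 else 0 := by
  rcases hd.eq_or_lt with rfl | hd
  · norm_num [geomKernel_of_nonneg, hα]
  · rw [geomKernel_of_nonpos hd.le, geomKernel_of_nonpos (by omega), if_neg hd.ne, zpow_add_one₀ hβ]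
    ring

lemma geomKernel_interior_row (hα : α ≠ 0) (hβ : β ≠ 0) (d : ℤ) :
    (α * β + 1) * geomKernel α β d - β * geomKernel α β (d - 1) - α * geomKernel α β (d + 1) =
      if d = 0 then α * β - 1 else 0 := by
  rcases lt_trichotomy d 0 with hd | rfl | hd
  · rw [geomKernel_of_nonpos hd.le, geomKernel_of_nonpos (by omega), geomKernel_of_nonpos (by omega),
      if_neg hd.ne, zpow_add_one₀ hβ, zpow_sub_one₀ hβ]
    field_simp; ring
  · norm_num [geomKernel_of_nonneg, geomKernel_of_nonpos]
    field_simp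
    ring
  · rw [geomKernel_of_nonneg hd.le, geomKernel_of_nonneg (by omega), geomKernel_of_nonneg (by omega),
      if_neg hd.ne', show -(d - 1) = -d + 1 by ring, show -(d + 1) = -d - 1 by ring,
      zpow_add_one₀ hα, zpow_sub_one₀ hα]
    field_simp; ring

lemma sum_range_ite_eq_add_one {M : Type*} [AddCommMonoid M] (f : ℕ → M) (n i : ℕ) :
    ∑ j ∈ range n, (if i = j + 1 then f j else 0) = if 0 < i ∧ i ≤ n then f (i - 1) else 0 := by
  cases i <;> simp

def tridiag (α β : 𝕜) (n i j : ℕ) : 𝕜 :=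
  (if i = j then α * β + (if i = 0 ∨ i = n - 1 then 0 else 1) else 0)
    - (if j = i + 1 then β else 0) - (if i = j + 1 then α else 0)

variable {n i : ℕ}

lemma sum_tridiag_mul (hi : i < n) (f : ℕ → 𝕜) :
    ∑ j ∈ range n, tridiag α β n i j * f j =
      (α * β + if i = 0 ∨ i = n - 1 then 0 else 1) * f i
        - (if i + 1 < n then β * f (i + 1) else 0) - (if 0 < i then α * f (i - 1) else 0) := by
  simp only [tridiag, sub_mul, ite_mul, zero_mul, sum_sub_distrib, sum_ite_eq, sum_ite_eq',
    sum_range_ite_eq_add_one, mem_range, if_pos hi, hi.le, and_true]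

lemma sum_tridiag_mul_geomKernel (hα : α ≠ 0) (hβ : β ≠ 0) (hn : 2 ≤ n) (hi : i < n) {k : ℕ}
    (hk : k < n) :
    ∑ j ∈ range n, tridiag α β n i j * geomKernel α β (k - j) = if i = k then α * β - 1 else 0 := by
  rw [sum_tridiag_mul hi]
  simp only [show i = k ↔ (k : ℤ) - i = 0 by omega]
  by_cases h0 : i = 0
  · subst h0
    simpa [show 1 < n by omega] using geomKernel_first_row hα hβ (d := k) (by omega)
  by_cases hl : i = n - 1
  · rw [if_pos (Or.inr hl), if_neg (by omega), if_pos (by omega),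
      show (k : ℤ) - (i - 1 : ℕ) = k - i + 1 by omega, add_zero, sub_zero]
    exact geomKernel_last_row hα hβ (by omega : (k : ℤ) - i ≤ 0)
  · rw [if_neg (by omega), if_pos (by omega), if_pos (by omega),
      show (k : ℤ) - (i - 1 : ℕ) = k - i + 1 by omega,
      show (k : ℤ) - (i + 1 : ℕ) = k - i - 1 by omega]
    exact geomKernel_interior_row hα hβ _

lemma sum_tridiag_row (hn : 2 ≤ n) (hi : i < n) :
    ∑ j ∈ range n, tridiag α β n i j =
      if i = 0 then (α - 1) * β else if i = n - 1 then α * (β - 1) else (α - 1) * (β - 1) := by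
  have row := sum_tridiag_mul (α := α) (β := β) hi 1
  simp only [Pi.one_apply, mul_one] at row
  rw [row]
  split_ifs <;> first | (exfalso; omega) | ring

lemma sum_tridiag_col (hn : 2 ≤ n) {j : ℕ} (hj : j < n) :
    ∑ i ∈ range n, tridiag α β n i j =
      if j = 0 then α * (β - 1) else if j = n - 1 then (α - 1) * β else (α - 1) * (β - 1) := by
  simp only [tridiag, sum_sub_distrib, sum_ite_eq', sum_range_ite_eq_add_one, mem_range, if_pos hj,
    hj.le, and_true]
  split_ifs <;> first | (exfalso; omega) | ring

def geomKernelMatrix (α β : 𝕜) (n : ℕ) : Matrix (Fin n) (Fin n) 𝕜 :=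
  Matrix.of fun i j => geomKernel α β (j - i)

def tridiagMatrix (α β : 𝕜) (n : ℕ) : Matrix (Fin n) (Fin n) 𝕜 :=
  Matrix.of fun i j => tridiag α β n i j

lemma tridiagMatrix_mul_geomKernelMatrix (hα : α ≠ 0) (hβ : β ≠ 0) (hn : 2 ≤ n) :
    tridiagMatrix α β n * geomKernelMatrix α β n = (α * β - 1) • 1 := by
  ext i k
  rw [Matrix.mul_apply, Matrix.smul_apply, Matrix.one_apply]
  simp only [tridiagMatrix, geomKernelMatrix, Matrix.of_apply]
  rw [Fin.sum_univ_eq_sum_range (fun j => tridiag α β n i j * geomKernel α β (k - j)),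
    sum_tridiag_mul_geomKernel hα hβ hn i.2 k.2]
  simp [Fin.ext_iff]

lemma inv_geomKernelMatrix (hα : α ≠ 0) (hβ : β ≠ 0) (hαβ : α * β ≠ 1) (hn : 2 ≤ n) :
    (geomKernelMatrix α β n)⁻¹ = (α * β - 1)⁻¹ • tridiagMatrix α β n :=
  Matrix.inv_eq_left_inv <| by
    rw [Matrix.smul_mul, tridiagMatrix_mul_geomKernelMatrix hα hβ hn, smul_smul,
      inv_mul_cancel₀ (sub_ne_zero.2 hαβ), one_smul]

lemma vecMul_one_tridiagMatrix (hn : 2 ≤ n) (j : Fin n) :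
    (1 ᵥ* tridiagMatrix α β n) j =
      if (j : ℕ) = 0 then α * (β - 1) else if (j : ℕ) = n - 1 then (α - 1) * β
      else (α - 1) * (β - 1) := by
  simp only [Matrix.vecMul, dotProduct, Pi.one_apply, one_mul, tridiagMatrix, Matrix.of_apply]
  rw [Fin.sum_univ_eq_sum_range (fun i => tridiag α β n i j), sum_tridiag_col hn j.2]

lemma tridiagMatrix_mulVec_one (hn : 2 ≤ n) (i : Fin n) :
    (tridiagMatrix α β n *ᵥ 1) i =
      if (i : ℕ) = 0 then (α - 1) * β else if (i : ℕ) = n - 1 then α * (β - 1)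
      else (α - 1) * (β - 1) := by
  simp only [Matrix.mulVec, dotProduct, Pi.one_apply, mul_one, tridiagMatrix, Matrix.of_apply]
  rw [Fin.sum_univ_eq_sum_range (fun j => tridiag α β n i j), sum_tridiag_row hn i.2]

theorem K_inv_rows_cols (n : ℕ) (hn : 2 ≤ n) (α β : ℝ) (hα : 1 < α) (hβ : 1 < β)
    (K : Matrix (Fin n) (Fin n) ℝ)
    (hK : ∀ i j : Fin n, K i j =
      if (i : ℕ) ≤ (j : ℕ) then α ^ ((i : ℤ) - (j : ℤ)) else β ^ ((j : ℤ) - (i : ℤ)))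
    (b c : Fin n → ℝ)
    (hb : ∀ i : Fin n, b i =
      if (i : ℕ) = 0 then α * (β - 1) / (α * β - 1)
      else if (i : ℕ) = n - 1 then (α - 1) * β / (α * β - 1)
      else (α - 1) * (β - 1) / (α * β - 1))
    (hc : ∀ i : Fin n, c i =
      if (i : ℕ) = 0 then (α - 1) * β / (α * β - 1)
      else if (i : ℕ) = n - 1 then α * (β - 1) / (α * β - 1)
      else (α - 1) * (β - 1) / (α * β - 1)) :
    Matrix.vecMul (fun _ => (1 : ℝ)) K⁻¹ = b ∧ K⁻¹.mulVec (fun _ => (1 : ℝ)) = c := by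
  have hK_eq : K = geomKernelMatrix α β n := by
    ext i j
    simp only [hK, geomKernelMatrix, geomKernel, Matrix.of_apply, sub_nonneg, neg_sub, Nat.cast_le]
  have hαβ : α * β ≠ 1 := (one_lt_mul_of_lt_of_le hα hβ.le).ne'
  rw [hK_eq, inv_geomKernelMatrix (by positivity) (by positivity) hαβ hn]
  refine ⟨funext fun j => ?_, funext fun i => ?_⟩
  · rw [Matrix.vecMul_smul, Pi.smul_apply, ← Pi.one_def, vecMul_one_tridiagMatrix hn, hb]
    split_ifs <;> simp only [smul_eq_mul] <;> ring
  · rw [Matrix.smul_mulVec, Pi.smul_apply, ← Pi.one_def, tridiagMatrix_mulVec_one hn, hc]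
    split_ifs <;> simp only [smul_eq_mul] <;> ring
end
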